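/- arXiv:2401.09998 — 4 statements merged into one kernel-verified Lean document; each statement's English description precedes it below -/
import Mathlib

section
/- For every integer n ≥ 3 and every y with 0 < y ≤ 1, one has y < n · ∫_y^{y√(n/(n-2))} ((n+y²)/(n+x²))^{(n+1)/2} dx. -/
/-! Bernoulli's inequality together with `(n + 1) y² ≤ n + x²` (valid as `y ≤ 1` and `y ≤ x`) bounds
the integrand on `[y, y s]`, `s = √(n / (n - 2))`, from below by the parabola `3/2 - x² / (2 y²)`, whose
integral is `y (s - 1) (8 - s - s²) / 6`. Since `n (s² - 1) = 2 s²`, the claim reduces to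
`3 (s + 1) < s² (8 - s - s²)` for `1 < s ≤ √3`; the difference is `s - 1` times the concave cubic
`-s³ - 2 s² + 6 s + 3`, which is positive at both ends of that interval. -/

open Real MeasureTheory intervalIntegral

theorem three_halves_sub_sq_div_le_rpow {ν x y : ℝ} (hν : 1 ≤ ν) (hy0 : 0 < y) (hy1 : y ≤ 1)
    (hyx : y ≤ x) :
    3 / 2 - x ^ 2 / (2 * y ^ 2) ≤ ((ν + y ^ 2) / (ν + x ^ 2)) ^ ((ν + 1) / 2) := by
  have hden : 0 < ν + x ^ 2 := by positivity
  have hxy : y ^ 2 ≤ x ^ 2 := pow_le_pow_left₀ hy0.le hyx 2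
  have hbase : ((ν + y ^ 2) / (ν + x ^ 2)) = 1 + (y ^ 2 - x ^ 2) / (ν + x ^ 2) := by
    field_simp; ring
  have ht : -1 ≤ (y ^ 2 - x ^ 2) / (ν + x ^ 2) := by
    rw [le_div_iff₀ hden]; nlinarith
  have hweight : (ν + 1) * y ^ 2 ≤ ν + x ^ 2 := by
    have hy2 : y ^ 2 ≤ 1 := pow_le_one₀ hy0.le hy1
    nlinarith [mul_nonneg (by linarith : 0 ≤ ν) (sub_nonneg.2 hy2)]
  have hlin : (y ^ 2 - x ^ 2) / (2 * y ^ 2) ≤ (ν + 1) / 2 * ((y ^ 2 - x ^ 2) / (ν + x ^ 2)) := by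
    rw [div_mul_div_comm, div_le_div_iff₀ (by positivity) (by positivity)]
    nlinarith [mul_nonneg (sub_nonneg.2 hxy) (sub_nonneg.2 hweight)]
  calc 3 / 2 - x ^ 2 / (2 * y ^ 2) = 1 + (y ^ 2 - x ^ 2) / (2 * y ^ 2) := by
        field_simp; ring
    _ ≤ 1 + (ν + 1) / 2 * ((y ^ 2 - x ^ 2) / (ν + x ^ 2)) := by linarith
    _ ≤ ((ν + y ^ 2) / (ν + x ^ 2)) ^ ((ν + 1) / 2) := by
        rw [hbase]; exact one_add_mul_self_le_rpow_one_add ht (by linarith)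

theorem integral_three_halves_sub_sq_div {y : ℝ} (hy : y ≠ 0) (s : ℝ) :
    ∫ x in y..y * s, (3 / 2 - x ^ 2 / (2 * y ^ 2)) = y * ((s - 1) * (8 - s - s ^ 2)) / 6 := by
  rw [integral_sub intervalIntegrable_const
      (((continuous_pow 2).intervalIntegrable _ _).div_const _),
    intervalIntegral.integral_const, smul_eq_mul, intervalIntegral.integral_div, integral_pow]
  field_simp
  ring

theorem three_mul_add_one_lt_sq_mul {s : ℝ} (hs1 : 1 < s) (hs3 : s ^ 2 ≤ 3) :
    3 * (s + 1) < s ^ 2 * (8 - s - s ^ 2) := by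
  nlinarith [mul_pos (sub_pos.2 hs1) (sub_pos.2 hs1),
    mul_nonneg (mul_nonneg (sub_nonneg.2 hs1.le) (sub_nonneg.2 hs1.le)) (sub_nonneg.2 hs3)]

theorem six_lt_mul_sqrt_sub_one_mul {ν : ℝ} (hν : 3 ≤ ν) :
    6 < ν * ((√(ν / (ν - 2)) - 1) * (8 - √(ν / (ν - 2)) - √(ν / (ν - 2)) ^ 2)) := by
  set s := √(ν / (ν - 2))
  have hs2 : s ^ 2 = ν / (ν - 2) := sq_sqrt (div_nonneg (by linarith) (by linarith))
  have hν_eq : ν * (s ^ 2 - 1) = 2 * s ^ 2 := by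
    rw [hs2]; field_simp [show ν - 2 ≠ 0 by linarith]; ring
  have hs1 : 1 < s := by
    rw [← one_lt_sq_iff₀ (sqrt_nonneg _), hs2, one_lt_div (by linarith)]; linarith
  have hs3 : s ^ 2 ≤ 3 := by
    rw [hs2, div_le_iff₀ (by linarith)]; linarith
  have := three_mul_add_one_lt_sq_mul hs1 hs3
  nlinarith

/-- For every integer `n ≥ 3` and every `y` with `0 < y ≤ 1`,
`y < n · ∫_y^{y√(n/(n-2))} ((n+y²)/(n+x²))^{(n+1)/2} dx`. -/
theorem student_t_integral_inequality (n : ℕ) (hn : 3 ≤ n) (y : ℝ) (hy0 : 0 < y)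
    (hy1 : y ≤ 1) :
    y < (n : ℝ) * ∫ x in y..(y * Real.sqrt ((n : ℝ) / ((n : ℝ) - 2))),
      (((n : ℝ) + y ^ 2) / ((n : ℝ) + x ^ 2)) ^ (((n : ℝ) + 1) / 2) := by
  have hn3 : (3 : ℝ) ≤ n := by exact_mod_cast hn
  set s := √((n : ℝ) / (n - 2))
  have hs : 1 ≤ s := one_le_sqrt.2 <| (one_le_div (by linarith)).2 (by linarith)
  have hbound : ∫ x in y..y * s, (3 / 2 - x ^ 2 / (2 * y ^ 2)) ≤
      ∫ x in y..y * s, (((n : ℝ) + y ^ 2) / (n + x ^ 2)) ^ (((n : ℝ) + 1) / 2) := by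
    refine integral_mono_on (le_mul_of_one_le_right hy0.le hs)
      (Continuous.intervalIntegrable (by fun_prop) _ _)
      (Continuous.intervalIntegrable ?_ _ _)
      fun x hx => three_halves_sub_sq_div_le_rpow (by linarith) hy0 hy1 hx.1
    exact (continuous_const.div (by fun_prop) fun x => by positivity).rpow_const
      fun x => .inr (by positivity)
  calc y < n * (y * ((s - 1) * (8 - s - s ^ 2)) / 6) := by
        nlinarith [six_lt_mul_sqrt_sub_one_mul hn3]
    _ = n * ∫ x in y..y * s, (3 / 2 - x ^ 2 / (2 * y ^ 2)) := by
        rw [integral_three_halves_sub_sq_div hy0.ne']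
    _ ≤ _ := mul_le_mul_of_nonneg_left hbound (Nat.cast_nonneg n)
end

section
/- For any y > 0, inf over all α > 0 and all sufficiently small shape parameters of P(|X_α - Γ(1+1/α)| ≥ y√(Γ(1+2/α) - Γ(1+1/α)²)) equals 0, where X_α is Weibull with shape α and rate 1. Consequently the anti-concentration function of the Weibull family is identically zero. -/
/-!
Take the shape `α = 1/n`. Then `Γ(1 + 1/α) = n!` and `Γ(1 + 2/α) = (2n)!`, and since
`(2n)! / (n!)² = binom(2n, n) → ∞`, the lower threshold `n! - y·σ` is eventually negative.
Only the upper tail `P(X ≥ n!) = exp(-(n!)^{1/n})` remains, and `(n!)^{1/n} → ∞`.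
-/

open MeasureTheory Filter Real Set

/-- Law of the Weibull distribution with shape `a` and rate `1`:
density `a x^{a-1} e^{-x^a}` for `x > 0`. -/
noncomputable def weibullMeasure (a : ℝ) : Measure ℝ :=
  volume.withDensity fun x =>
    ENNReal.ofReal (if 0 < x then a * x ^ (a - 1) * Real.exp (-(x ^ a)) else 0)

open scoped Nat Topology ENNReal

/-- `P(|X - E X| ≥ y σ)` for `X` Weibull of shape `a`: `Γ(1 + 1/a)` and `Γ(1 + 2/a)` are the first
two moments of `X`. -/
noncomputable def weibullDeviationProb (y a : ℝ) : ℝ≥0∞ :=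
  weibullMeasure a
    {x : ℝ | y * √(Gamma (1 + 2 / a) - Gamma (1 + 1 / a) ^ 2) ≤ |x - Gamma (1 + 1 / a)|}

lemma weibullMeasure_Iic_zero (a : ℝ) : weibullMeasure a (Iic 0) = 0 := by
  rw [weibullMeasure, withDensity_apply _ measurableSet_Iic]
  refine setLIntegral_eq_zero measurableSet_Iic fun x (hx : x ≤ 0) => ?_
  simp [not_lt.2 hx]

lemma hasDerivAt_neg_exp_neg_rpow {a x : ℝ} (hx : x ≠ 0) :
    HasDerivAt (fun x : ℝ => -exp (-(x ^ a))) (a * x ^ (a - 1) * exp (-(x ^ a))) x := by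
  refine (((hasDerivAt_exp (-(x ^ a))).comp x
    (hasDerivAt_rpow_const (p := a) (Or.inl hx)).neg).neg).congr_deriv ?_
  ring

lemma weibullMeasure_Ici {a t : ℝ} (ha : 0 < a) (ht : 0 < t) :
    weibullMeasure a (Ici t) = ENNReal.ofReal (exp (-(t ^ a))) := by
  set f : ℝ → ℝ := fun x => a * x ^ (a - 1) * exp (-(x ^ a))
  have hderiv : ∀ x ∈ Ici t, HasDerivAt (fun x : ℝ => -exp (-(x ^ a))) (f x) x :=
    fun x hx => hasDerivAt_neg_exp_neg_rpow (ht.trans_le hx).ne'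
  have hf_nonneg : ∀ x ∈ Ioi t, 0 ≤ f x := fun x hx => by
    have : 0 < x := ht.trans hx
    positivity
  have hlim : Tendsto (fun x : ℝ => -exp (-(x ^ a))) atTop (𝓝 0) := by
    simpa using (tendsto_exp_neg_atTop_nhds_zero.comp (tendsto_rpow_atTop ha)).neg
  have hdensity : EqOn (fun x => ENNReal.ofReal (if 0 < x then f x else 0))
      (fun x => ENNReal.ofReal (f x)) (Ioi t) := fun x hx => by
    simp only [if_pos (ht.trans hx)]
  rw [weibullMeasure, withDensity_apply _ measurableSet_Ici, ← setLIntegral_congr Ioi_ae_eq_Ici,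
    setLIntegral_congr_fun measurableSet_Ioi hdensity,
    ← ofReal_integral_eq_lintegral_ofReal (integrableOn_Ioi_deriv_of_nonneg' hderiv hf_nonneg hlim)
      ((ae_restrict_iff' measurableSet_Ioi).2 (ae_of_all _ hf_nonneg)),
    integral_Ioi_of_hasDerivAt_of_nonneg' hderiv hf_nonneg hlim, zero_sub, neg_neg]

lemma weibullMeasure_le_abs_sub_le {a m c : ℝ} (ha : 0 < a) (hm : 0 < m) (hmc : m ≤ c) :
    weibullMeasure a {x | c ≤ |x - m|} ≤ ENNReal.ofReal (exp (-(m ^ a))) := by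
  have hsub : {x | c ≤ |x - m|} ⊆ Iic 0 ∪ Ici m := fun x (hx : c ≤ |x - m|) => by
    rcases le_abs'.1 hx with h | h
    · exact Or.inl (show x ≤ 0 by linarith)
    · exact Or.inr (show m ≤ x by linarith)
  calc weibullMeasure a {x | c ≤ |x - m|}
      ≤ weibullMeasure a (Iic 0) + weibullMeasure a (Ici m) :=
        (measure_mono hsub).trans (measure_union_le _ _)
    _ = ENNReal.ofReal (exp (-(m ^ a))) := by
        rw [weibullMeasure_Iic_zero, weibullMeasure_Ici ha hm, zero_add]

lemma le_mul_sqrt_sub_sq {m s y : ℝ} (hm : 0 ≤ m) (hy : 0 ≤ y)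
    (h : m ^ 2 ≤ y ^ 2 * (s - m ^ 2)) : m ≤ y * √(s - m ^ 2) := by
  calc m = √(m ^ 2) := (sqrt_sq hm).symm
    _ ≤ √(y ^ 2 * (s - m ^ 2)) := sqrt_le_sqrt h
    _ = y * √(s - m ^ 2) := by rw [sqrt_mul (sq_nonneg y), sqrt_sq hy]

lemma factorial_sq_mul_centralBinom (n : ℕ) : n ! ^ 2 * Nat.centralBinom n = (2 * n)! := by
  rw [Nat.centralBinom_eq_two_mul_choose, two_mul, ← Nat.add_choose_mul_factorial_mul_factorial]
  ring

lemma eventually_mul_factorial_sq_le (c : ℝ) :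
    ∀ᶠ n : ℕ in atTop, c * (n ! : ℝ) ^ 2 ≤ ((2 * n)! : ℝ) := by
  have hbinom : Tendsto (fun n => (Nat.centralBinom n : ℝ)) atTop atTop :=
    tendsto_natCast_atTop_atTop.comp Nat.centralBinom_strictMono.tendsto_atTop
  filter_upwards [hbinom.eventually_ge_atTop c] with n hn
  rw [← factorial_sq_mul_centralBinom]
  push_cast
  nlinarith [sq_nonneg (n ! : ℝ)]

lemma tendsto_factorial_rpow_inv_atTop :
    Tendsto (fun n : ℕ => (n ! : ℝ) ^ (1 / n : ℝ)) atTop atTop := by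
  refine tendsto_atTop.2 fun T => ?_
  set T' := max T 0
  have hpow : ∀ᶠ n : ℕ in atTop, T' ^ n / n ! < 1 :=
    (FloorSemiring.tendsto_pow_div_factorial_atTop T').eventually_lt_const one_pos
  filter_upwards [hpow, eventually_ne_atTop 0] with n hn hn0
  rw [div_lt_one (by positivity)] at hn
  calc T ≤ T' := le_max_left T 0
    _ = (T' ^ n) ^ (1 / n : ℝ) := by rw [one_div, pow_rpow_inv_natCast (le_max_right T 0) hn0]
    _ ≤ (n ! : ℝ) ^ (1 / n : ℝ) := by gcongr

lemma weibullDeviationProb_inv_natCast_le {y : ℝ} (hy : 0 < y) {n : ℕ} (hn : n ≠ 0)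
    (hfac : (1 + y ^ 2) / y ^ 2 * (n ! : ℝ) ^ 2 ≤ ((2 * n)! : ℝ)) :
    weibullDeviationProb y (1 / n) ≤ ENNReal.ofReal (exp (-((n ! : ℝ) ^ (1 / n : ℝ)))) := by
  have hmean : Gamma (1 + 1 / (1 / n : ℝ)) = n ! := by
    rw [one_div_one_div, add_comm, Gamma_nat_eq_factorial]
  have hsecond : Gamma (1 + 2 / (1 / n : ℝ)) = (2 * n)! := by
    rw [div_div_eq_mul_div, div_one, ← Nat.cast_ofNat, ← Nat.cast_mul, add_comm,
      Gamma_nat_eq_factorial]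
  rw [weibullDeviationProb, hmean, hsecond]
  refine weibullMeasure_le_abs_sub_le (by positivity) (by positivity)
    (le_mul_sqrt_sub_sq (by positivity) hy.le ?_)
  rw [div_mul_eq_mul_div, div_le_iff₀ (by positivity)] at hfac
  linarith

/-- For any `y > 0`,
`inf_{α > 0} P(|X_α - Γ(1+1/α)| ≥ y √(Γ(1+2/α) - Γ(1+1/α)²)) = 0` where `X_α` is Weibull
with shape `α` and rate `1`; i.e. the anti-concentration function of the Weibull family is
identically zero. -/
theorem weibull_no_anticoncentration (y : ℝ) (hy : 0 < y) :
    (⨅ a : Set.Ioi (0 : ℝ),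
        weibullMeasure a
          {x : ℝ | y * Real.sqrt (Real.Gamma (1 + 2 / (a : ℝ))
              - Real.Gamma (1 + 1 / (a : ℝ)) ^ 2)
            ≤ |x - Real.Gamma (1 + 1 / (a : ℝ))|}) = 0 := by
  have hbound : Tendsto (fun n : ℕ => ENNReal.ofReal (exp (-((n ! : ℝ) ^ (1 / n : ℝ)))))
      atTop (𝓝 0) := by
    rw [← ENNReal.ofReal_zero]
    exact (ENNReal.tendsto_ofReal tendsto_exp_neg_atTop_nhds_zero).comp
      tendsto_factorial_rpow_inv_atTop
  refine le_antisymm (ge_of_tendsto hbound ?_) bot_le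
  filter_upwards [eventually_mul_factorial_sq_le ((1 + y ^ 2) / y ^ 2), eventually_ne_atTop 0]
    with n hfac hn
  have hn_pos : (1 / n : ℝ) ∈ Ioi 0 := by simp [Nat.pos_of_ne_zero hn]
  exact (iInf_le (fun a : Ioi (0 : ℝ) => weibullDeviationProb y a) ⟨1 / n, hn_pos⟩).trans
    (weibullDeviationProb_inv_natCast_le hy hn hfac)
end

section
/- Let X_σ = e^{α+σY} where Y is standard normal, α ∈ ℝ, σ > 0 (log-normal). For any y > 0, if σ² > ln((1+y²)/y²), then P(|X_σ - e^{α+σ²/2}| ≥ y·e^{α+σ²/2}√(e^{σ²}-1)) = 1 - Φ(σ/2 + ln(1 + y√(e^{σ²}-1))/σ), and this tends to 0 as σ → +∞. Hence the anti-concentration function of the log-normal family is 0. -/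
open MeasureTheory ProbabilityTheory Filter Real Set
open scoped Topology

/-!
Write `m = exp (a + σ² / 2)` and `L = y √(exp σ² - 1)`; the condition on `σ²` says `L > 1`.
Then the lower deviation `exp (a + σ t) ≤ m - m L ≤ 0` is impossible, so the deviation event is
the upper tail `exp (a + σ t) ≥ m (1 + L)`, i.e. `t ≥ σ / 2 + log (1 + L) / σ`. This threshold is
at least `σ / 2`, so the probability of the event tends to `0` as `σ → ∞`, and its infimum over
the family is `0`.
-/

section ProbabilityMeasure

variable {α : Type*} [MeasurableSpace α] [TopologicalSpace α] [LinearOrder α]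
  [OrderClosedTopology α] [OpensMeasurableSpace α] {μ : Measure α}
  [IsProbabilityMeasure μ] [NullSingletonClass μ]

lemma measure_Ici_eq_one_sub_measure_Iic (c : α) : μ (Ici c) = 1 - μ (Iic c) := by
  rw [← measure_congr Ioi_ae_eq_Ici, ← compl_Iic, prob_compl_eq_one_sub measurableSet_Iic]

lemma tendsto_measure_Ici_atTop_zero [(atTop : Filter α).IsCountablyGenerated] :
    Tendsto (fun x => μ (Ici x)) atTop (𝓝 0) := by
  have h := ENNReal.Tendsto.sub (tendsto_const_nhds (x := 1)) (tendsto_measure_Iic_atTop μ)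
    (Or.inl ENNReal.one_ne_top)
  simpa only [measure_univ, tsub_self, ← measure_Ici_eq_one_sub_measure_Iic] using h

end ProbabilityMeasure

instance : NullSingletonClass (gaussianReal 0 1) := nullSingletonClass_gaussianReal one_ne_zero

lemma le_abs_sub_iff_of_pos {x m d : ℝ} (hx : 0 < x) (hmd : m ≤ d) :
    d ≤ |x - m| ↔ m + d ≤ x := by
  rw [le_abs]
  constructor
  · rintro (h | h) <;> linarith
  · intro h
    left
    linarith

lemma one_le_mul_sqrt_exp_sub_one {y s : ℝ} (hy : 0 < y) (hs : log ((1 + y ^ 2) / y ^ 2) < s) :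
    1 ≤ y * sqrt (exp s - 1) := by
  have h : 1 < y ^ 2 * (exp s - 1) := by
    rw [log_lt_iff_lt_exp (by positivity), div_lt_iff₀ (by positivity)] at hs
    linarith
  calc 1 = sqrt 1 := sqrt_one.symm
    _ ≤ sqrt (y ^ 2 * (exp s - 1)) := sqrt_le_sqrt h.le
    _ = y * sqrt (exp s - 1) := by rw [sqrt_mul (sq_nonneg y), sqrt_sq hy.le]

/-- `exp (a + σ ^ 2 / 2)` and `exp (a + σ ^ 2 / 2) * √(exp σ² - 1)` are the mean and the standard
deviation of `exp (a + σ t)` for standard Gaussian `t`. -/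
def lognormalDeviationSet (y a σ : ℝ) : Set ℝ :=
  {t | y * exp (a + σ ^ 2 / 2) * sqrt (exp (σ ^ 2) - 1) ≤ |exp (a + σ * t) - exp (a + σ ^ 2 / 2)|}

lemma lognormalDeviationSet_eq_Ici {y a σ : ℝ} (hσ : 0 < σ)
    (hL : 1 ≤ y * sqrt (exp (σ ^ 2) - 1)) :
    lognormalDeviationSet y a σ = Ici (σ / 2 + log (1 + y * sqrt (exp (σ ^ 2) - 1)) / σ) := by
  have hm := exp_pos (a + σ ^ 2 / 2)
  have hthreshold : exp (a + σ ^ 2 / 2) + y * exp (a + σ ^ 2 / 2) * sqrt (exp (σ ^ 2) - 1)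
      = exp (a + σ ^ 2 / 2 + log (1 + y * sqrt (exp (σ ^ 2) - 1))) := by
    rw [exp_add _ (log _), exp_log (by linarith)]
    ring
  have hcenter : σ / 2 + log (1 + y * sqrt (exp (σ ^ 2) - 1)) / σ
      = (σ ^ 2 / 2 + log (1 + y * sqrt (exp (σ ^ 2) - 1))) / σ := by
    field_simp
  ext t
  rw [lognormalDeviationSet, mem_ofPred_eq, mem_Ici, le_abs_sub_iff_of_pos (exp_pos _)
    (by nlinarith [mul_le_mul_of_nonneg_left hL hm.le]), hthreshold, exp_le_exp, hcenter,
    div_le_iff₀ hσ]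
  constructor <;> intro h <;> linarith

section Deviation

variable (μ : Measure ℝ) [IsProbabilityMeasure μ] [NullSingletonClass μ] {y : ℝ}

lemma measure_lognormalDeviationSet {a σ : ℝ} (hy : 0 < y) (hσ : 0 < σ)
    (hcond : log ((1 + y ^ 2) / y ^ 2) < σ ^ 2) :
    μ (lognormalDeviationSet y a σ)
      = 1 - μ (Iic (σ / 2 + log (1 + y * sqrt (exp (σ ^ 2) - 1)) / σ)) := by
  rw [lognormalDeviationSet_eq_Ici hσ (one_le_mul_sqrt_exp_sub_one hy hcond),
    measure_Ici_eq_one_sub_measure_Iic]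

lemma tendsto_measure_lognormalDeviationSet_atTop (hy : 0 < y) (a : ℝ) :
    Tendsto (fun σ => μ (lognormalDeviationSet y a σ)) atTop (𝓝 0) := by
  have hlarge : ∀ᶠ σ in atTop, 0 < σ ∧ log ((1 + y ^ 2) / y ^ 2) < σ ^ 2 :=
    (eventually_gt_atTop 0).and ((tendsto_pow_atTop two_ne_zero).eventually_gt_atTop _)
  refine tendsto_of_tendsto_of_tendsto_of_le_of_le' tendsto_const_nhds
    ((tendsto_measure_Ici_atTop_zero (μ := μ)).comp (tendsto_id.atTop_div_const two_pos))
    (.of_forall fun _ => zero_le) ?_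
  filter_upwards [hlarge] with σ ⟨hσ, hcond⟩
  have hL := one_le_mul_sqrt_exp_sub_one hy hcond
  rw [lognormalDeviationSet_eq_Ici hσ hL]
  exact measure_mono (Ici_subset_Ici.2
    (le_add_of_nonneg_right (div_nonneg (log_nonneg (by linarith)) hσ.le)))

end Deviation

/-- Let `X_σ = e^{α+σY}` with `Y` standard normal (log-normal). For `y > 0`:
if `σ² > ln((1+y²)/y²)` then
`P(|X_σ - e^{α+σ²/2}| ≥ y e^{α+σ²/2} √(e^{σ²}-1)) = 1 - Φ(σ/2 + ln(1+y√(e^{σ²}-1))/σ)`;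
this tends to `0` as `σ → +∞`; hence the anti-concentration function of the log-normal
family is `0`. -/
theorem lognormal_no_anticoncentration (y : ℝ) (hy : 0 < y) :
    (∀ a σ : ℝ, 0 < σ → Real.log ((1 + y ^ 2) / y ^ 2) < σ ^ 2 →
      (gaussianReal 0 1) {t : ℝ |
          y * Real.exp (a + σ ^ 2 / 2) * Real.sqrt (Real.exp (σ ^ 2) - 1)
            ≤ |Real.exp (a + σ * t) - Real.exp (a + σ ^ 2 / 2)|}
        = 1 - (gaussianReal 0 1)
            (Set.Iic (σ / 2 + Real.log (1 + y * Real.sqrt (Real.exp (σ ^ 2) - 1)) / σ))) ∧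
    (∀ a : ℝ,
      Tendsto (fun σ : ℝ => (gaussianReal 0 1) {t : ℝ |
          y * Real.exp (a + σ ^ 2 / 2) * Real.sqrt (Real.exp (σ ^ 2) - 1)
            ≤ |Real.exp (a + σ * t) - Real.exp (a + σ ^ 2 / 2)|})
        atTop (nhds 0)) ∧
    (⨅ p : {q : ℝ × ℝ // 0 < q.2},
        (gaussianReal 0 1) {t : ℝ |
          y * Real.exp (p.1.1 + p.1.2 ^ 2 / 2) * Real.sqrt (Real.exp (p.1.2 ^ 2) - 1)
            ≤ |Real.exp (p.1.1 + p.1.2 * t) - Real.exp (p.1.1 + p.1.2 ^ 2 / 2)|}) = 0 := by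
  have htendsto := tendsto_measure_lognormalDeviationSet_atTop (gaussianReal 0 1) hy
  refine ⟨fun a σ hσ hcond => measure_lognormalDeviationSet _ hy hσ hcond, htendsto, ?_⟩
  refine nonpos_iff_eq_zero.1 (ge_of_tendsto (htendsto 0) ?_)
  filter_upwards [eventually_gt_atTop 0] with σ hσ
  exact iInf_le_of_le ⟨(0, σ), hσ⟩ le_rfl
end

section
/- Let X_q be Beta(1,q) with density q(1-x)^{q-1} on (0,1). For any y > 0, for all sufficiently small q > 0, P(|X_q - 1/(1+q)| ≥ y√(q/((1+q)²(2+q)))) = P(X_q ≤ 1/(1+q) - y√(q/((1+q)²(2+q)))), and this probability is at most 1 - (q/(1+q))^q, which tends to 0 as q ↓ 0. Hence the anti-concentration function of the Beta family is identically zero. -/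
/-! A `Beta(1, q)` variable lives on `(0, 1)`, while its mean `1/(1+q)` plus `y` standard
deviations exceeds `1` once `q(2+q) ≤ y²`; for such `q` the two-sided deviation event reduces
to the lower tail. That tail sits below the mean, whose distribution function value is
`1 - (1 - 1/(1+q))^q = 1 - (q/(1+q))^q`, and `(q/(1+q))^q = q^q / (1+q)^q → 1` as `q ↓ 0`.
Specialising the infimum over all parameters to `(1, q)` with `q ↓ 0` makes it vanish. -/

open MeasureTheory Filter Real Set

/-- Law of the Beta distribution with parameters `p, q`:
density `Γ(p+q)/(Γ(p)Γ(q)) x^{p-1} (1-x)^{q-1}` on `(0,1)`. -/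
noncomputable def betaMeasure (p q : ℝ) : Measure ℝ :=
  volume.withDensity fun x =>
    ENNReal.ofReal
      (if 0 < x ∧ x < 1 then
        Real.Gamma (p + q) / (Real.Gamma p * Real.Gamma q) * x ^ (p - 1) * (1 - x) ^ (q - 1)
      else 0)

open Topology

theorem betaMeasure_Ici_eq_zero (p q : ℝ) {b : ℝ} (hb : 1 ≤ b) : betaMeasure p q (Ici b) = 0 := by
  rw [betaMeasure, withDensity_apply _ measurableSet_Ici]
  refine (setLIntegral_congr_fun measurableSet_Ici fun x hx => ?_).trans lintegral_zero
  rw [if_neg fun h => (h.2.trans_le hb).not_ge hx, ENNReal.ofReal_zero]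

theorem setOf_le_abs_sub_eq (r m : ℝ) : {x : ℝ | r ≤ |x - m|} = Iic (m - r) ∪ Ici (m + r) := by
  ext x
  simp only [mem_ofPred_eq, mem_union, mem_Iic, mem_Ici, le_abs']
  constructor <;> rintro (h | h) <;> [left; right; left; right] <;> linarith

theorem betaMeasure_le_abs_sub_eq (p q : ℝ) {r m : ℝ} (h : 1 ≤ m + r) :
    betaMeasure p q {x | r ≤ |x - m|} = betaMeasure p q (Iic (m - r)) := by
  rw [setOf_le_abs_sub_eq]
  exact measure_congr <| union_ae_eq_left_of_ae_eq_empty <|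
    ae_eq_empty.mpr (betaMeasure_Ici_eq_zero p q h)

theorem betaMeasure_one_eq {q : ℝ} (hq : 0 < q) :
    betaMeasure 1 q = volume.withDensity
      ((Ioo 0 1).indicator fun x => ENNReal.ofReal (q * (1 - x) ^ (q - 1))) := by
  have hconst : Real.Gamma (1 + q) / (Real.Gamma 1 * Real.Gamma q) = q := by
    rw [add_comm, Real.Gamma_add_one hq.ne', Real.Gamma_one, one_mul,
      mul_div_cancel_right₀ _ (Real.Gamma_pos_of_pos hq).ne']
  simp_rw [betaMeasure, hconst, sub_self, Real.rpow_zero, mul_one]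
  congr 1
  ext x
  by_cases hx : x ∈ Ioo (0 : ℝ) 1
  · simp [hx, mem_Ioo.mp hx]
  · simp [hx, mem_Ioo.not.mp hx]

theorem integral_mul_one_sub_rpow_sub_one {q a : ℝ} (hq : 0 < q) :
    ∫ x in (0)..a, q * (1 - x) ^ (q - 1) = 1 - (1 - a) ^ q := by
  rw [intervalIntegral.integral_const_mul, intervalIntegral.integral_comp_sub_left
    (fun x => x ^ (q - 1)), sub_zero, integral_rpow (Or.inl (by linarith)), sub_add_cancel,
    one_rpow]
  field_simp

theorem betaMeasure_one_Iic {q a : ℝ} (hq : 0 < q) (ha : 0 ≤ a) (ha1 : a < 1) :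
    betaMeasure 1 q (Iic a) = ENNReal.ofReal (1 - (1 - a) ^ q) := by
  have hdensity : ContinuousOn (fun x : ℝ => q * (1 - x) ^ (q - 1)) (Icc 0 a) :=
    continuousOn_const.mul <| ContinuousOn.rpow_const (by fun_prop) fun x hx =>
      Or.inl (by linarith [hx.2])
  have hset : Ioo 0 1 ∩ Iic a = Ioc 0 a :=
    ext fun x => ⟨fun h => ⟨h.1.1, h.2⟩, fun h => ⟨⟨h.1, h.2.trans_lt ha1⟩, h.2⟩⟩
  rw [betaMeasure_one_eq hq, withDensity_apply _ measurableSet_Iic,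
    lintegral_indicator measurableSet_Ioo, Measure.restrict_restrict measurableSet_Ioo, hset,
    ← ofReal_integral_eq_lintegral_ofReal, ← intervalIntegral.integral_of_le ha,
    integral_mul_one_sub_rpow_sub_one hq]
  · exact (hdensity.integrableOn_compact isCompact_Icc).mono_set Ioc_subset_Icc_self
  · filter_upwards [ae_restrict_mem measurableSet_Ioc] with x hx
    have : 0 < 1 - x := by linarith [hx.2]
    positivity

theorem one_le_inv_one_add_add_mul_sqrt {q y : ℝ} (hq : 0 < q) (hy : 0 ≤ y)
    (hqy : q * (2 + q) ≤ y ^ 2) :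
    1 ≤ 1 / (1 + q) + y * √(q / ((1 + q) ^ 2 * (2 + q))) := by
  have hsq : (q / (1 + q)) ^ 2 ≤ y ^ 2 * (q / ((1 + q) ^ 2 * (2 + q))) := by
    rw [div_pow, mul_div_assoc', div_le_div_iff₀ (by positivity) (by positivity)]
    nlinarith [mul_le_mul_of_nonneg_left hqy (by positivity : 0 ≤ q * (1 + q) ^ 2)]
  have hle : q / (1 + q) ≤ y * √(q / ((1 + q) ^ 2 * (2 + q))) := by
    rw [← sqrt_sq hy, ← sqrt_mul (sq_nonneg y)]
    exact le_sqrt_of_sq_le hsq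
  have hm : 1 / (1 + q) = 1 - q / (1 + q) := by field_simp; ring
  linarith

theorem betaMeasure_one_Iic_inv_one_add {q : ℝ} (hq : 0 < q) :
    betaMeasure 1 q (Iic (1 / (1 + q))) = ENNReal.ofReal (1 - (q / (1 + q)) ^ q) := by
  rw [betaMeasure_one_Iic hq (by positivity) ((div_lt_one (by positivity)).2 (by linarith))]
  congr 3
  field_simp
  ring

theorem betaMeasure_one_deviation {q r : ℝ} (hq : 0 < q) (hr : 0 ≤ r)
    (hqr : 1 ≤ 1 / (1 + q) + r) :
    betaMeasure 1 q {x | r ≤ |x - 1 / (1 + q)|} = betaMeasure 1 q {x | x ≤ 1 / (1 + q) - r} ∧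
      betaMeasure 1 q {x | x ≤ 1 / (1 + q) - r} ≤ ENNReal.ofReal (1 - (q / (1 + q)) ^ q) :=
  ⟨betaMeasure_le_abs_sub_eq 1 q hqr, (measure_mono (Iic_subset_Iic.2 (sub_le_self _ hr))).trans_eq
    (betaMeasure_one_Iic_inv_one_add hq)⟩

theorem tendsto_rpow_self_nhdsGT_zero : Tendsto (fun q : ℝ => q ^ q) (𝓝[>] 0) (𝓝 1) := by
  have h := (continuous_exp.tendsto 0).comp (tendsto_log_mul_rpow_nhdsGT_zero one_pos)
  rw [exp_zero] at h
  refine h.congr' (eventually_mem_nhdsWithin.mono fun q (hq : 0 < q) => ?_)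
  simp only [Function.comp_apply, rpow_one, rpow_def_of_pos hq, mul_comm]

theorem tendsto_div_one_add_rpow_self :
    Tendsto (fun q : ℝ => (q / (1 + q)) ^ q) (𝓝[>] 0) (𝓝 1) := by
  have hden : Tendsto (fun q : ℝ => (1 + q) ^ q) (𝓝 0) (𝓝 1) := by
    have hcont : ContinuousAt (fun q : ℝ => (1 + q) ^ q) 0 :=
      (continuousAt_const.add continuousAt_id).rpow continuousAt_id (Or.inl (by norm_num))
    simpa using hcont.tendsto
  have h := tendsto_rpow_self_nhdsGT_zero.div (hden.mono_left nhdsWithin_le_nhds) one_ne_zero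
  rw [div_one] at h
  refine h.congr' (eventually_mem_nhdsWithin.mono fun q (hq : 0 < q) => ?_)
  simp only [Pi.div_apply, div_rpow hq.le (by linarith : (0 : ℝ) ≤ 1 + q)]

/-- Let `X_q` be `Beta(1, q)`. For any `y > 0`, for all sufficiently small
`q > 0`, `P(|X_q - 1/(1+q)| ≥ y√(q/((1+q)²(2+q)))) =
P(X_q ≤ 1/(1+q) - y√(q/((1+q)²(2+q))))`, this is at most `1 - (q/(1+q))^q`, and
`(q/(1+q))^q → 1` as `q ↓ 0`; hence the anti-concentration function of the Beta family
is identically zero. -/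
theorem beta_no_anticoncentration (y : ℝ) (hy : 0 < y) :
    (∀ᶠ q : ℝ in nhdsWithin 0 (Set.Ioi 0),
      betaMeasure 1 q {x : ℝ |
          y * Real.sqrt (q / ((1 + q) ^ 2 * (2 + q))) ≤ |x - 1 / (1 + q)|}
        = betaMeasure 1 q {x : ℝ |
            x ≤ 1 / (1 + q) - y * Real.sqrt (q / ((1 + q) ^ 2 * (2 + q)))} ∧
      betaMeasure 1 q {x : ℝ |
          x ≤ 1 / (1 + q) - y * Real.sqrt (q / ((1 + q) ^ 2 * (2 + q)))}
        ≤ ENNReal.ofReal (1 - (q / (1 + q)) ^ q)) ∧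
    Tendsto (fun q : ℝ => (q / (1 + q)) ^ q) (nhdsWithin 0 (Set.Ioi 0)) (nhds 1) ∧
    (⨅ w : {v : ℝ × ℝ // 0 < v.1 ∧ 0 < v.2},
        betaMeasure w.1.1 w.1.2 {x : ℝ |
          y * Real.sqrt (w.1.1 * w.1.2
              / ((w.1.1 + w.1.2) ^ 2 * (w.1.1 + w.1.2 + 1)))
            ≤ |x - w.1.1 / (w.1.1 + w.1.2)|}) = 0 := by
  have hsmall : ∀ᶠ q : ℝ in 𝓝[>] 0, 0 < q ∧ q * (2 + q) ≤ y ^ 2 :=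
    eventually_mem_nhdsWithin.and <| nhdsWithin_le_nhds <|
      ((by fun_prop : Continuous fun q : ℝ => q * (2 + q)).tendsto 0).eventually
        (ge_mem_nhds (by simpa using pow_pos hy 2))
  have hbound := hsmall.mono fun q ⟨hq, hqy⟩ =>
    betaMeasure_one_deviation hq (by positivity) (one_le_inv_one_add_add_mul_sqrt hq hy.le hqy)
  have hlim : Tendsto (fun q : ℝ => ENNReal.ofReal (1 - (q / (1 + q)) ^ q)) (𝓝[>] 0) (𝓝 0) := by
    simpa using ENNReal.tendsto_ofReal
      ((tendsto_const_nhds (x := (1 : ℝ))).sub tendsto_div_one_add_rpow_self)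
  refine ⟨hbound, tendsto_div_one_add_rpow_self, nonpos_iff_eq_zero.1 <|
    ge_of_tendsto hlim <| (hsmall.and hbound).mono fun q ⟨⟨hq, _⟩, heq, hle⟩ => ?_⟩
  have hvar : 1 * q / ((1 + q) ^ 2 * (1 + q + 1)) = q / ((1 + q) ^ 2 * (2 + q)) := by ring
  refine iInf_le_of_le ⟨(1, q), one_pos, hq⟩ ?_
  dsimp only
  rw [hvar]
  exact heq.trans_le hle
end
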